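/- arXiv:2510.21486 — 4 statements merged into one kernel-verified Lean document; each statement's English description precedes it below -/
import Mathlib

section
/- Let K be a simplicial complex with ordered vertex set and S: C^Δ_k(K) → C^Δ_k(K) the simplicial barycentric-subdivision-type operator sending a k-simplex (x_0 ⋯ x_k) to the sum over all permutations σ of {0,…,k} of sgn(σ) times the simplex with vertices (x_{σ(0)}, b({σ(0),σ(1)}), …, b({σ(0),…,σ(k)})), where b assigns to each face its barycentric vertex (interpreting tuples with repeated vertices as 0). Then S is a chain map: ∂S = S∂. -/
open Finset

/-- Position sign of a vertex in a simplex. -/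
def posSign {V : Type*} [LinearOrder V] (s : Finset V) (v : V) : ℤ :=
  (-1) ^ ((s.filter (· < v)).card)

/-- Boundary of the augmented simplicial chain complex. -/
noncomputable def simplicialBoundary {V : Type*} [LinearOrder V] :
    (Finset V →₀ ℤ) →ₗ[ℤ] (Finset V →₀ ℤ) :=
  Finsupp.lsum ℤ fun s => LinearMap.toSpanSingleton ℤ _
    (∑ v ∈ s, posSign (s.erase v) v • Finsupp.single (s.erase v) 1)

/-- Number of inversions of a list of vertices. -/
def inversions {V : Type*} [LinearOrder V] (l : List V) : ℕ :=
  ((Finset.univ : Finset (Fin l.length × Fin l.length)).filter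
    (fun p => p.1 < p.2 ∧ l.get p.2 < l.get p.1)).card

/-- The chain represented by a formal tuple of vertices: `0` if some vertex
repeats, and otherwise the underlying (sorted) simplex with the sign of the
permutation sorting the tuple. -/
noncomputable def tupleChain {V : Type*} [LinearOrder V] (l : List V) :
    Finset V →₀ ℤ :=
  if l.Nodup then ((-1 : ℤ) ^ inversions l) • Finsupp.single l.toFinset 1 else 0

/-- The barycentric-subdivision-type operator associated with a barycenter
assignment `b` on finite vertex sets: a `k`-simplex `(x_0 ⋯ x_k)` is sent to the
signed sum over all permutations `σ` of `{0,…,k}` of the tuples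
`(b({x_{σ(0)}}), b({x_{σ(0)},x_{σ(1)}}), …, b({x_{σ(0)},…,x_{σ(k)}}))`,
tuples with repeated vertices being `0`. -/
noncomputable def subdiv {V : Type*} [LinearOrder V] (b : Finset V → V) :
    (Finset V →₀ ℤ) →ₗ[ℤ] (Finset V →₀ ℤ) :=
  Finsupp.lsum ℤ fun s => LinearMap.toSpanSingleton ℤ _
    (∑ σ : Equiv.Perm (Fin s.card),
      ((Equiv.Perm.sign σ : ℤ)) • tupleChain (List.ofFn fun j : Fin s.card =>
        b ((Finset.univ.filter (· ≤ j)).image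
          fun m => ((s.orderIsoOfFin rfl) (σ m) : V))))

section Aux

variable {V : Type*} [LinearOrder V]

lemma negpow_congr {a c : ℕ} (h : a % 2 = c % 2) : ((-1:ℤ))^a = (-1)^c := by
  rw [neg_one_pow_eq_pow_mod_two, h, ← neg_one_pow_eq_pow_mod_two]

lemma negpow_neg_congr {a c : ℕ} (h : a % 2 ≠ c % 2) : ((-1:ℤ))^a = -((-1)^c) := by
  rw [neg_one_pow_eq_pow_mod_two, neg_one_pow_eq_pow_mod_two (n := c)]
  rcases Nat.mod_two_eq_zero_or_one a with h1 | h1 <;>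
    rcases Nat.mod_two_eq_zero_or_one c with h2 | h2 <;>
      simp [h1, h2] at h ⊢ <;> norm_num

/-- The cone (on a new last vertex `w`) of a single simplex. -/
noncomputable def coneChain (w : V) (t : Finset V) : Finset V →₀ ℤ :=
  if w ∈ t then 0
  else ((-1 : ℤ) ^ ((t.filter (w < ·)).card)) • Finsupp.single (insert w t) 1

/-- The cone operator appending the vertex `w` at the end of each tuple. -/
noncomputable def coneMap (w : V) : (Finset V →₀ ℤ) →ₗ[ℤ] (Finset V →₀ ℤ) :=
  Finsupp.lsum ℤ fun t => LinearMap.toSpanSingleton ℤ _ (coneChain w t)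

lemma lsum_single_one (g : Finset V → (Finset V →₀ ℤ)) (s : Finset V) :
    (Finsupp.lsum ℤ fun t => LinearMap.toSpanSingleton ℤ _ (g t))
      (Finsupp.single s 1) = g s := by
  rw [Finsupp.lsum_single, LinearMap.toSpanSingleton_apply, one_smul]

lemma coneMap_single (w : V) (s : Finset V) :
    coneMap w (Finsupp.single s 1) = coneChain w s := lsum_single_one _ _

lemma bd_single (s : Finset V) :
    simplicialBoundary (Finsupp.single s 1) =
      ∑ v ∈ s, posSign (s.erase v) v • Finsupp.single (s.erase v) 1 :=
  lsum_single_one _ _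

lemma subdiv_single (b : Finset V → V) (s : Finset V) {k : ℕ} (h : s.card = k) :
    subdiv b (Finsupp.single s 1) =
      ∑ σ : Equiv.Perm (Fin k),
        ((Equiv.Perm.sign σ : ℤ)) • tupleChain (List.ofFn fun j : Fin k =>
          b ((Finset.univ.filter (· ≤ j)).image
            fun m => ((s.orderIsoOfFin h) (σ m) : V))) := by
  subst h; exact lsum_single_one _ _

lemma card_filter_fin (l : List V) (w : V) :
    ((Finset.univ : Finset (Fin l.length)).filter fun i => w < l.get i).card
      = (l.filter (fun x => w < x)).length := by
  induction l with
  | nil => simp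
  | cons a l ih =>
      simp only [List.length_cons]
      rw [Finset.card_filter, Fin.sum_univ_succ, ← Finset.card_filter]
      simp only [List.get_eq_getElem, Fin.val_succ, List.getElem_cons_succ, Fin.val_zero,
        List.getElem_cons_zero]
      simp only [List.get_eq_getElem] at ih
      rw [ih, List.filter_cons]
      by_cases h : w < a <;> simp [h] <;> omega

lemma card_filter_erase (t : Finset V) (u : V) (p : V → Prop) [DecidablePred p]
    (hu : u ∈ t) :
    (t.filter p).card = ((t.erase u).filter p).card + (if p u then 1 else 0) := by
  rw [Finset.filter_erase]
  by_cases h : p u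
  · rw [Finset.card_erase_of_mem (Finset.mem_filter.2 ⟨hu, h⟩)]
    have : 0 < (t.filter p).card := Finset.card_pos.2 ⟨u, Finset.mem_filter.2 ⟨hu, h⟩⟩
    simp [h]; omega
  · rw [Finset.erase_eq_of_notMem (fun hc => h (Finset.mem_filter.1 hc).2)]
    simp [h]

lemma inversions_concat (l : List V) (w : V) :
    inversions (l ++ [w]) = inversions l + (l.filter (fun x => w < x)).length := by
  classical
  have hlen : (l ++ [w]).length = l.length + 1 := by simp
  have hgetc : ∀ i : Fin l.length,
      (l ++ [w]).get (Fin.cast hlen.symm i.castSucc) = l.get i := by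
    intro i
    simp only [List.get_eq_getElem, Fin.coe_cast, Fin.coe_castSucc]
    exact List.getElem_append_left i.isLt
  have hgetl : (l ++ [w]).get (Fin.cast hlen.symm (Fin.last l.length)) = w := by
    simp only [List.get_eq_getElem, Fin.coe_cast, Fin.val_last]
    simp
  unfold inversions
  rw [← card_filter_fin l w]
  rw [Finset.card_filter, Finset.card_filter, Finset.card_filter]
  rw [← Equiv.sum_comp ((finCongr hlen.symm).prodCongr (finCongr hlen.symm))
    (fun p : Fin ((l++[w]).length) × Fin ((l++[w]).length) =>
      if p.1 < p.2 ∧ (l++[w]).get p.2 < (l++[w]).get p.1 then (1:ℕ) else 0)]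
  rw [Fintype.sum_prod_type]
  simp only [Equiv.prodCongr_apply, Prod.map, finCongr_apply]
  simp only [Fin.sum_univ_castSucc]
  simp only [hgetc, hgetl]
  have hlt : ∀ i j : Fin l.length,
      (Fin.cast hlen.symm i.castSucc < Fin.cast hlen.symm j.castSucc) = (i < j) := by
    intro i j
    simp only [Fin.lt_def, Fin.coe_cast, Fin.coe_castSucc]
  have hlt2 : ∀ i : Fin l.length,
      (Fin.cast hlen.symm i.castSucc < Fin.cast hlen.symm (Fin.last l.length)) = True := by
    intro i
    simp only [Fin.lt_def, Fin.coe_cast, Fin.coe_castSucc, Fin.val_last]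
    exact eq_true i.isLt
  have hlt3 : ∀ j : Fin l.length,
      (Fin.cast hlen.symm (Fin.last l.length) < Fin.cast hlen.symm j.castSucc) = False := by
    intro j
    simp only [Fin.lt_def, Fin.coe_cast, Fin.coe_castSucc, Fin.val_last]
    exact eq_false (by omega)
  have hlt4 : (Fin.cast hlen.symm (Fin.last l.length) < Fin.cast hlen.symm (Fin.last l.length))
      = False := by simp
  simp only [hlt, hlt2, hlt3, hlt4, true_and, false_and, if_false, and_true, lt_self_iff_false,
    Finset.sum_const_zero, add_zero]
  rw [Finset.sum_add_distrib, Fintype.sum_prod_type]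

lemma tupleChain_nil : tupleChain ([] : List V) = Finsupp.single ∅ 1 := by
  simp [tupleChain, inversions]

lemma coneMap_tupleChain (w : V) (l : List V) :
    coneMap w (tupleChain l) = tupleChain (l ++ [w]) := by
  classical
  by_cases hnd : l.Nodup
  · by_cases hw : w ∈ l
    · have hnd2 : ¬ (l ++ [w]).Nodup := by simp [List.nodup_append, hw]
      rw [tupleChain, if_pos hnd, tupleChain, if_neg hnd2, map_smul, coneMap_single, coneChain,
        if_pos (by simpa using hw), smul_zero]
    · have hnd2 : (l ++ [w]).Nodup := by
        simp [List.nodup_append, hw, hnd]; intro a ha h; exact hw (h ▸ ha)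
      have htf : (l ++ [w]).toFinset = insert w l.toFinset := by
        ext x; simp only [List.mem_toFinset, List.mem_append, List.mem_singleton, Finset.mem_insert]; tauto
      have hcard : (l.toFinset.filter (w < ·)).card = (l.filter (fun x => w < x)).length := by
        have h1 : l.toFinset.filter (w < ·) = (l.filter (fun x => w < x)).toFinset := by
          rw [List.toFinset_filter]
          apply Finset.filter_congr
          intro x _
          simp
        rw [h1, List.toFinset_card_of_nodup (hnd.filter _)]
      rw [tupleChain, if_pos hnd, tupleChain, if_pos hnd2, map_smul, coneMap_single, coneChain,
        if_neg (by simpa using hw), htf, hcard, smul_smul, ← pow_add, inversions_concat]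
  · have hnd2 : ¬ (l ++ [w]).Nodup := fun h => hnd (List.Nodup.of_append_left h)
    rw [tupleChain, if_neg hnd, tupleChain, if_neg hnd2, map_zero]

lemma posSign_erase_antisymm (s : Finset V) {u v : V} (hu : u ∈ s) (hv : v ∈ s)
    (huv : u ≠ v) :
    posSign (s.erase v) v * posSign ((s.erase v).erase u) u
      = -(posSign (s.erase u) u * posSign ((s.erase u).erase v) v) := by
  classical
  unfold posSign
  have h1 := card_filter_erase (s.erase v) u (· < v) (Finset.mem_erase.2 ⟨huv, hu⟩)
  have h2 := card_filter_erase (s.erase u) v (· < u) (Finset.mem_erase.2 ⟨huv.symm, hv⟩)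
  rw [show ((s.erase u).erase v) = ((s.erase v).erase u) from Finset.erase_right_comm] at h2 ⊢
  have h1' : ((s.erase v).filter (· < v)).card
      = (((s.erase v).erase u).filter (· < v)).card + (if u < v then 1 else 0) := by
    simpa using h1
  have h2' : ((s.erase u).filter (· < u)).card
      = (((s.erase v).erase u).filter (· < u)).card + (if v < u then 1 else 0) := by
    simpa using h2
  rw [h1', h2', ← pow_add, ← pow_add]
  rcases huv.lt_or_gt with h | h
  · rw [if_pos h, if_neg (asymm h)]
    exact negpow_neg_congr (by omega)
  · rw [if_neg (asymm h), if_pos h]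
    exact negpow_neg_congr (by omega)

lemma bd_bd_single (s : Finset V) :
    simplicialBoundary (simplicialBoundary (Finsupp.single s (1:ℤ))) = 0 := by
  classical
  rw [bd_single, map_sum]
  simp only [map_smul, bd_single]
  simp only [Finset.smul_sum]
  rw [Finset.sum_sigma']
  refine Finset.sum_involution (fun a _ => ⟨a.2, a.1⟩) ?_ ?_ ?_ ?_
  · rintro ⟨v, u⟩ ha
    simp only [Finset.mem_sigma, Finset.mem_erase] at ha
    obtain ⟨hv, hu1, hu2⟩ := ha
    simp only
    rw [smul_smul, smul_smul, posSign_erase_antisymm s hu2 hv hu1,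
      show ((s.erase u).erase v) = ((s.erase v).erase u) from Finset.erase_right_comm,
      neg_smul, neg_add_cancel]
  · rintro ⟨v, u⟩ ha _
    simp only [Finset.mem_sigma, Finset.mem_erase] at ha
    intro hc
    have : u = v := by
      have := congrArg Sigma.fst hc
      simpa using this
    exact ha.2.1 this
  · rintro ⟨v, u⟩ ha
    simp only [Finset.mem_sigma, Finset.mem_erase] at ha ⊢
    exact ⟨ha.2.2, fun h => ha.2.1 h.symm, ha.1⟩
  · rintro ⟨v, u⟩ _
    rfl

lemma bd_bd (x : Finset V →₀ ℤ) :
    simplicialBoundary (simplicialBoundary x) = 0 := by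
  induction x using Finsupp.induction_linear with
  | zero => simp
  | add f g hf hg => rw [map_add, map_add, hf, hg, add_zero]
  | single s m =>
      have h1 : Finsupp.single s m = m • Finsupp.single s (1 : ℤ) := by
        rw [Finsupp.smul_single, smul_eq_mul, mul_one]
      rw [h1, map_smul, map_smul, bd_bd_single, smul_zero]

lemma bd_coneChain (w : V) (t : Finset V) :
    simplicialBoundary (coneChain w t) =
      ((-1 : ℤ) ^ t.card) • Finsupp.single t 1
        + coneMap w (simplicialBoundary (Finsupp.single t 1)) := by
  classical
  rw [bd_single, map_sum]
  simp only [map_smul, coneMap_single]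
  by_cases hw : w ∈ t
  · rw [coneChain, if_pos hw, map_zero]
    obtain ⟨m, hm⟩ : ∃ m, t.card = m + 1 :=
      ⟨t.card - 1, by have := Finset.card_pos.2 ⟨w, hw⟩; omega⟩
    rw [Finset.sum_eq_single_of_mem w hw (fun v hv hne => by
      rw [coneChain, if_pos (Finset.mem_erase.2 ⟨hne.symm, hw⟩), smul_zero])]
    have hfc : ((t.erase w).filter (· < w)).card + ((t.erase w).filter (w < ·)).card = m := by
      have h1 := Finset.card_filter_add_card_filter_not (s := t.erase w) (p := (· < w))
      have h2 : (t.erase w).filter (fun x => ¬ x < w) = (t.erase w).filter (w < ·) := by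
        apply Finset.filter_congr
        intro x hx
        have hne : x ≠ w := (Finset.mem_erase.1 hx).1
        exact ⟨fun h => hne.lt_or_gt.resolve_left h, fun h => asymm h⟩
      have h3 : (t.erase w).card = m := by rw [Finset.card_erase_of_mem hw, hm]; omega
      rw [h2] at h1
      omega
    rw [coneChain, if_neg (fun hc => (Finset.mem_erase.1 hc).1 rfl), Finset.insert_erase hw]
    unfold posSign
    rw [smul_smul, ← pow_add, hm, ← add_smul]
    have hz : ((-1:ℤ))^(m+1) + (-1)^(((t.erase w).filter (· < w)).card
        + ((t.erase w).filter (w < ·)).card) = 0 := by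
      rw [hfc, pow_succ]; ring
    rw [hz, zero_smul]
  · rw [coneChain, if_neg hw, map_smul, bd_single, Finset.sum_insert hw, smul_add]
    have hpart1 : ((-1:ℤ) ^ (t.filter (w < ·)).card) •
        (posSign ((insert w t).erase w) w • Finsupp.single ((insert w t).erase w) (1:ℤ))
          = ((-1 : ℤ) ^ t.card) • Finsupp.single t 1 := by
      rw [Finset.erase_insert hw]
      unfold posSign
      rw [smul_smul, ← pow_add]
      congr 1
      have h1 := Finset.card_filter_add_card_filter_not (s := t) (p := (w < ·))
      have h2 : t.filter (fun x => ¬ w < x) = t.filter (· < w) := by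
        apply Finset.filter_congr
        intro x hx
        have hne : x ≠ w := fun hc => hw (hc ▸ hx)
        exact ⟨fun h => hne.lt_or_gt.resolve_right h, fun h => asymm h⟩
      rw [h2] at h1
      exact negpow_congr (by omega)
    have hpart2 : ((-1:ℤ) ^ (t.filter (w < ·)).card) •
        ∑ v ∈ t, posSign ((insert w t).erase v) v • Finsupp.single ((insert w t).erase v) (1:ℤ)
          = ∑ v ∈ t, posSign (t.erase v) v • coneChain w (t.erase v) := by
      rw [Finset.smul_sum]
      refine Finset.sum_congr rfl fun v hv => ?_
      have hwv : w ≠ v := fun hc => hw (hc ▸ hv)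
      have hwe : w ∉ t.erase v := fun hc => hw (Finset.mem_of_mem_erase hc)
      rw [Finset.erase_insert_of_ne hwv, coneChain, if_neg hwe]
      have hxcard : ((insert w (t.erase v)).filter (· < v)).card
          = ((t.erase v).filter (· < v)).card + (if w < v then 1 else 0) := by
        rw [Finset.filter_insert]
        split_ifs with h
        · rw [Finset.card_insert_of_notMem (fun hc => hwe (Finset.mem_filter.1 hc).1)]
        · omega
      have hacard := card_filter_erase t v (fun x => w < x) hv
      unfold posSign
      rw [hxcard, hacard, smul_smul, smul_smul, ← pow_add, ← pow_add]
      congr 1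
      refine negpow_congr ?_
      split_ifs <;> omega
    rw [hpart1, hpart2]

lemma bd_cone_homog (w : V) (m : ℕ) (x : Finset V →₀ ℤ)
    (hx : ∀ t ∈ x.support, t.card = m) :
    simplicialBoundary (coneMap w x) =
      ((-1 : ℤ) ^ m) • x + coneMap w (simplicialBoundary x) := by
  classical
  have hx2 : x = ∑ t ∈ x.support, (x t) • Finsupp.single t (1:ℤ) := by
    conv_lhs => rw [← Finsupp.sum_single x]
    rw [Finsupp.sum]
    exact Finset.sum_congr rfl fun t _ => by rw [Finsupp.smul_single, smul_eq_mul, mul_one]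
  rw [hx2]
  simp only [map_sum, map_smul, coneMap_single, Finset.smul_sum]
  rw [← Finset.sum_add_distrib]
  refine Finset.sum_congr rfl fun t ht => ?_
  rw [bd_coneChain, hx t ht, smul_add, smul_comm (x t) ((-1:ℤ)^m)]

lemma tupleChain_support (l : List V) :
    ∀ t ∈ (tupleChain l).support, t.card = l.length := by
  intro t ht
  rw [tupleChain] at ht
  split at ht
  · have h1 := Finsupp.support_smul ht
    have h2 := Finsupp.support_single_subset h1
    rw [Finset.mem_singleton] at h2
    rw [h2]
    exact List.toFinset_card_of_nodup (by assumption)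
  · simp at ht

lemma subdiv_support_card (b : Finset V → V) (s : Finset V) :
    ∀ t ∈ (subdiv b (Finsupp.single s (1:ℤ))).support, t.card = s.card := by
  intro t ht
  rw [subdiv_single b s rfl] at ht
  have h1 := Finsupp.support_finset_sum ht
  rw [Finset.mem_biUnion] at h1
  obtain ⟨σ, _, hσ⟩ := h1
  have h2 := Finsupp.support_smul hσ
  have h3 := tupleChain_support _ t h2
  rwa [List.length_ofFn] at h3

section Decomp

variable {k : ℕ}

/-- Extend a permutation of `Fin k` to `Fin (k+1)` fixing the last element. -/
def extPerm (τ : Equiv.Perm (Fin k)) : Equiv.Perm (Fin (k + 1)) :=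
  finSuccEquivLast.symm.permCongr τ.optionCongr

lemma extPerm_castSucc (τ : Equiv.Perm (Fin k)) (j : Fin k) :
    extPerm τ j.castSucc = (τ j).castSucc := by
  simp [extPerm, Equiv.permCongr_apply]

lemma extPerm_last (τ : Equiv.Perm (Fin k)) : extPerm τ (Fin.last k) = Fin.last k := by
  simp [extPerm, Equiv.permCongr_apply]

lemma sign_extPerm (τ : Equiv.Perm (Fin k)) :
    Equiv.Perm.sign (extPerm τ) = Equiv.Perm.sign τ := by
  rw [extPerm, Equiv.Perm.sign_permCongr, Equiv.optionCongr_sign]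

/-- The cycle `(p, p+1, …, k)` sending `last` to `p`. -/
def cyc (p : Fin (k + 1)) : Equiv.Perm (Fin (k + 1)) :=
  Fin.revPerm * (Fin.cycleRange p.rev)⁻¹ * Fin.revPerm

lemma cyc_last (p : Fin (k + 1)) : cyc p (Fin.last k) = p := by
  simp only [cyc, Equiv.Perm.mul_apply, Fin.revPerm_apply, Fin.rev_last]
  rw [show ((Fin.cycleRange p.rev)⁻¹ : Equiv.Perm (Fin (k+1))) 0
    = (Fin.cycleRange p.rev).symm 0 from rfl, Fin.cycleRange_symm_zero, Fin.rev_rev]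

lemma cyc_castSucc (p : Fin (k + 1)) (i : Fin k) :
    cyc p i.castSucc = p.succAbove i := by
  simp only [cyc, Equiv.Perm.mul_apply, Fin.revPerm_apply, Fin.rev_castSucc]
  rw [show ((Fin.cycleRange p.rev)⁻¹ : Equiv.Perm (Fin (k+1))) i.rev.succ
    = (Fin.cycleRange p.rev).symm i.rev.succ from rfl, Fin.cycleRange_symm_succ,
    ← Fin.rev_succAbove, Fin.rev_rev]

lemma sign_cyc (p : Fin (k + 1)) :
    (Equiv.Perm.sign (cyc p) : ℤ) = (-1) ^ (k - (p : ℕ)) := by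
  rw [cyc, map_mul, map_mul, mul_comm _ (Equiv.Perm.sign Fin.revPerm), ← mul_assoc,
    Int.units_mul_self, one_mul, Equiv.Perm.sign_inv, Fin.sign_cycleRange]
  push_cast
  congr 1
  rw [Fin.val_rev]
  omega

/-- Decomposition of a permutation of `Fin (k+1)` by its value at `last`. -/
def decPerm : Fin (k + 1) × Equiv.Perm (Fin k) → Equiv.Perm (Fin (k + 1)) :=
  fun q => cyc q.1 * extPerm q.2

lemma decPerm_last (p : Fin (k + 1)) (τ : Equiv.Perm (Fin k)) :
    decPerm (p, τ) (Fin.last k) = p := by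
  rw [decPerm, Equiv.Perm.mul_apply, extPerm_last, cyc_last]

lemma decPerm_castSucc (p : Fin (k + 1)) (τ : Equiv.Perm (Fin k)) (j : Fin k) :
    decPerm (p, τ) j.castSucc = p.succAbove (τ j) := by
  rw [decPerm, Equiv.Perm.mul_apply, extPerm_castSucc, cyc_castSucc]

lemma sign_decPerm (p : Fin (k + 1)) (τ : Equiv.Perm (Fin k)) :
    (Equiv.Perm.sign (decPerm (p, τ)) : ℤ)
      = (-1) ^ (k - (p : ℕ)) * (Equiv.Perm.sign τ : ℤ) := by
  rw [decPerm, map_mul, sign_extPerm]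
  push_cast
  rw [sign_cyc]

lemma extPerm_surj (π : Equiv.Perm (Fin (k + 1))) (hπ : π (Fin.last k) = Fin.last k) :
    ∃ τ : Equiv.Perm (Fin k), extPerm τ = π := by
  refine ⟨Equiv.removeNone (finSuccEquivLast.permCongr π), ?_⟩
  have h1 : (finSuccEquivLast.permCongr π) none = none := by
    simp [Equiv.permCongr_apply, hπ]
  have h2 := map_equiv_removeNone (finSuccEquivLast.permCongr π)
  rw [h1, Equiv.swap_self] at h2
  rw [extPerm, h2]
  rw [show (Equiv.refl (Option (Fin k)) * finSuccEquivLast.permCongr π : Equiv.Perm _)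
    = finSuccEquivLast.permCongr π from one_mul _]
  rw [← Equiv.permCongr_symm]
  exact finSuccEquivLast.permCongr.symm_apply_apply π

lemma decPerm_bijective : Function.Bijective (decPerm (k := k)) := by
  constructor
  · rintro ⟨p, τ⟩ ⟨p', τ'⟩ h
    have hp : p = p' := by
      have h1 := congrArg (fun σ : Equiv.Perm (Fin (k+1)) => σ (Fin.last k)) h
      simpa [decPerm_last] using h1
    subst hp
    have hτ : τ = τ' := by
      ext j
      have h1 := congrArg (fun σ : Equiv.Perm (Fin (k+1)) => σ j.castSucc) h
      simp only [decPerm_castSucc] at h1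
      have := Fin.succAbove_right_injective h1
      rw [this]
    rw [hτ]
  · intro σ
    set p := σ (Fin.last k) with hp
    have hπ : ((cyc p)⁻¹ * σ) (Fin.last k) = Fin.last k := by
      rw [Equiv.Perm.mul_apply, ← hp]
      apply (cyc p).injective
      rw [show (cyc p) ((cyc p)⁻¹ p) = p from Equiv.apply_symm_apply (cyc p) p, cyc_last]
    obtain ⟨τ, hτ⟩ := extPerm_surj _ hπ
    exact ⟨(p, τ), by rw [decPerm]; simp only; rw [hτ, ← mul_assoc, mul_inv_cancel, one_mul]⟩

end Decomp

/-- The summand of `subdiv` on a single simplex. -/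
noncomputable def faceChain (b : Finset V → V) (s : Finset V) {k : ℕ} (h : s.card = k)
    (τ : Equiv.Perm (Fin k)) : Finset V →₀ ℤ :=
  tupleChain (List.ofFn fun j : Fin k =>
    b ((Finset.univ.filter (· ≤ j)).image fun m => ((s.orderIsoOfFin h) (τ m) : V)))

lemma subdiv_single' (b : Finset V → V) (s : Finset V) {k : ℕ} (h : s.card = k) :
    subdiv b (Finsupp.single s 1) =
      ∑ τ : Equiv.Perm (Fin k), ((Equiv.Perm.sign τ : ℤ)) • faceChain b s h τ :=
  subdiv_single b s h

lemma image_univ_orderIso (s : Finset V) {k : ℕ} (h : s.card = k) :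
    Finset.univ.image (fun p : Fin k => ((s.orderIsoOfFin h) p : V)) = s := by
  ext a
  simp only [Finset.mem_image, Finset.mem_univ, true_and]
  constructor
  · rintro ⟨p, rfl⟩
    exact ((s.orderIsoOfFin h) p).2
  · intro ha
    exact ⟨(s.orderIsoOfFin h).symm ⟨a, ha⟩, by simp⟩

lemma filter_le_castSucc {k : ℕ} (j : Fin k) :
    ((Finset.univ : Finset (Fin (k+1))).filter (· ≤ j.castSucc))
      = ((Finset.univ : Finset (Fin k)).filter (· ≤ j)).image Fin.castSucc := by
  ext m
  simp only [Finset.mem_filter, Finset.mem_univ, true_and, Finset.mem_image]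
  constructor
  · intro hm
    rw [Fin.le_def] at hm
    simp only [Fin.coe_castSucc] at hm
    have hmk : (m : ℕ) < k := by have := j.isLt; omega
    refine ⟨⟨(m : ℕ), hmk⟩, ?_, ?_⟩
    · rw [Fin.le_def]; exact hm
    · apply Fin.ext; simp
  · rintro ⟨i, hi, rfl⟩
    rw [Fin.le_def] at hi ⊢
    simpa using hi

lemma orderIso_erase (s : Finset V) {k : ℕ} (hs : s.card = k + 1) (p : Fin (k + 1))
    (hface : (s.erase ((s.orderIsoOfFin hs) p : V)).card = k) (i : Fin k) :
    (((s.erase ((s.orderIsoOfFin hs) p : V)).orderIsoOfFin hface) i : V)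
      = ((s.orderIsoOfFin hs) (p.succAbove i) : V) := by
  have hmem : ∀ x : Fin k,
      ((s.orderIsoOfFin hs) (p.succAbove x) : V) ∈ s.erase ((s.orderIsoOfFin hs) p : V) := by
    intro x
    rw [Finset.mem_erase]
    refine ⟨?_, ((s.orderIsoOfFin hs) (p.succAbove x)).2⟩
    intro hc
    exact Fin.succAbove_ne p x ((s.orderIsoOfFin hs).injective (Subtype.coe_injective hc))
  have hmono : StrictMono (fun x : Fin k => ((s.orderIsoOfFin hs) (p.succAbove x) : V)) := by
    intro a c hac
    simp only [Finset.coe_orderIsoOfFin_apply]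
    exact (s.orderEmbOfFin hs).strictMono (Fin.strictMono_succAbove p hac)
  have huniq := Finset.orderEmbOfFin_unique hface hmem hmono
  rw [Finset.coe_orderIsoOfFin_apply]
  exact (congrFun huniq i).symm

lemma posSign_orderIso (s : Finset V) {k : ℕ} (hs : s.card = k + 1) (p : Fin (k + 1)) :
    posSign (s.erase ((s.orderIsoOfFin hs) p : V)) ((s.orderIsoOfFin hs) p : V)
      = (-1) ^ (p : ℕ) := by
  classical
  unfold posSign
  congr 1
  have hfe : (s.erase ((s.orderIsoOfFin hs) p : V)).filter (· < ((s.orderIsoOfFin hs) p : V))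
      = s.filter (· < ((s.orderIsoOfFin hs) p : V)) := by
    ext x
    simp only [Finset.mem_filter, Finset.mem_erase]
    exact ⟨fun h => ⟨h.1.2, h.2⟩, fun h => ⟨⟨ne_of_lt h.2, h.1⟩, h.2⟩⟩
  rw [hfe]
  have hinj : Function.Injective (fun m : Fin (k+1) => ((s.orderIsoOfFin hs) m : V)) :=
    fun a c h => (s.orderIsoOfFin hs).injective (Subtype.coe_injective h)
  have himg2 : s.filter (· < ((s.orderIsoOfFin hs) p : V))
      = (Finset.Iio p).image (fun m => ((s.orderIsoOfFin hs) m : V)) := by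
    ext y
    simp only [Finset.mem_filter, Finset.mem_image, Finset.mem_Iio]
    constructor
    · rintro ⟨hy, hlt⟩
      refine ⟨(s.orderIsoOfFin hs).symm ⟨y, hy⟩, ?_, by simp⟩
      rw [← (s.orderIsoOfFin hs).lt_iff_lt, OrderIso.apply_symm_apply]
      exact Subtype.coe_lt_coe.1 hlt
    · rintro ⟨m, hm, rfl⟩
      exact ⟨((s.orderIsoOfFin hs) m).2,
        Subtype.coe_lt_coe.2 ((s.orderIsoOfFin hs).lt_iff_lt.2 hm)⟩
  rw [himg2, Finset.card_image_of_injective _ hinj, Fin.card_Iio]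

lemma subdiv_single_cone (b : Finset V → V) (s : Finset V) {k : ℕ} (hs : s.card = k + 1) :
    subdiv b (Finsupp.single s 1) =
      ((-1 : ℤ) ^ k) • coneMap (b s)
        (subdiv b (simplicialBoundary (Finsupp.single s 1))) := by
  classical
  have hface : ∀ p : Fin (k+1), (s.erase ((s.orderIsoOfFin hs) p : V)).card = k := fun p => by
    rw [Finset.card_erase_of_mem ((s.orderIsoOfFin hs) p).2, hs]
    omega
  have himg := image_univ_orderIso s hs
  have hinj : Function.Injective (fun p : Fin (k+1) => ((s.orderIsoOfFin hs) p : V)) :=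
    fun a c h => (s.orderIsoOfFin hs).injective (Subtype.coe_injective h)
  have hL : subdiv b (Finsupp.single s 1)
      = ∑ q : Fin (k+1) × Equiv.Perm (Fin k),
          (((-1:ℤ)) ^ (k - (q.1 : ℕ)) * (Equiv.Perm.sign q.2 : ℤ))
            • coneMap (b s) (faceChain b (s.erase ((s.orderIsoOfFin hs) q.1 : V))
                (hface q.1) q.2) := by
    rw [subdiv_single' b s hs]
    refine (Fintype.sum_bijective decPerm decPerm_bijective _ _ ?_).symm
    rintro ⟨p, τ⟩
    rw [sign_decPerm]
    congr 1
    have hlist : faceChain b s hs (decPerm (p, τ))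
        = tupleChain ((List.ofFn fun j : Fin k =>
            b ((Finset.univ.filter (· ≤ j)).image
              fun m => (((s.erase ((s.orderIsoOfFin hs) p : V)).orderIsoOfFin (hface p))
                (τ m) : V))) ++ [b s]) := by
      unfold faceChain
      congr 1
      rw [List.ofFn_succ', List.concat_eq_append]
      congr 1
      · apply congrArg List.ofFn
        funext j
        congr 1
        rw [filter_le_castSucc j, Finset.image_image]
        refine Finset.image_congr ?_
        intro m _
        simp only [Function.comp]
        rw [decPerm_castSucc]
        exact (orderIso_erase s hs p (hface p) (τ m)).symm
      · congr 1
        rw [Finset.filter_true_of_mem (fun m _ => Fin.le_last m)]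
        rw [show (fun m => ((s.orderIsoOfFin hs) ((decPerm (p,τ)) m) : V))
          = (fun m => ((s.orderIsoOfFin hs) m : V)) ∘ (decPerm (p,τ)) from rfl,
          ← Finset.image_image]
        have hup : (Finset.univ : Finset (Fin (k+1))).image ⇑(decPerm (p,τ))
            = Finset.univ := by
          ext a
          simp only [Finset.mem_image, Finset.mem_univ, true_and, iff_true]
          exact ⟨(decPerm (p,τ)).symm a, Equiv.apply_symm_apply _ a⟩
        rw [hup, himg]
    rw [hlist, ← coneMap_tupleChain]
    rfl
  have hsum : ∀ (f : V → (Finset V →₀ ℤ)),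
      ∑ v ∈ s, f v = ∑ p : Fin (k+1), f ((s.orderIsoOfFin hs) p : V) := by
    intro f
    have e1 : ∑ v ∈ Finset.univ.image (fun p : Fin (k+1) => ((s.orderIsoOfFin hs) p : V)), f v
        = ∑ p : Fin (k+1), f ((s.orderIsoOfFin hs) p : V) :=
      Finset.sum_image (fun a _ c _ h => hinj h)
    rw [← e1, himg]
  have h1 : subdiv b (simplicialBoundary (Finsupp.single s 1))
      = ∑ p : Fin (k+1), ((-1:ℤ)^(p:ℕ)) • ∑ τ : Equiv.Perm (Fin k),
          ((Equiv.Perm.sign τ : ℤ)) • faceChain b (s.erase ((s.orderIsoOfFin hs) p : V))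
            (hface p) τ := by
    rw [bd_single, map_sum]
    simp only [map_smul]
    rw [hsum (fun v => posSign (s.erase v) v • subdiv b (Finsupp.single (s.erase v) 1))]
    refine Finset.sum_congr rfl fun p _ => ?_
    rw [posSign_orderIso s hs p, subdiv_single' b _ (hface p)]
  rw [hL, h1]
  simp only [map_sum, map_smul, Finset.smul_sum, smul_smul]
  rw [Fintype.sum_prod_type]
  refine Finset.sum_congr rfl fun p _ => Finset.sum_congr rfl fun τ _ => ?_
  dsimp only
  congr 1
  rw [← mul_assoc, ← pow_add]
  congr 1
  exact negpow_congr (by have := p.isLt; omega)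

lemma key (b : Finset V → V) : ∀ (n : ℕ) (s : Finset V), s.card = n →
    simplicialBoundary (subdiv b (Finsupp.single s (1:ℤ)))
      = subdiv b (simplicialBoundary (Finsupp.single s 1)) := by
  intro n
  induction n using Nat.strong_induction_on with
  | _ n ih =>
    intro s hn
    rcases n with _ | k
    · have hs : s = ∅ := Finset.card_eq_zero.1 hn
      subst hs
      have hbd : simplicialBoundary (Finsupp.single (∅ : Finset V) (1:ℤ)) = 0 := by
        rw [bd_single]; simp
      have hsub : subdiv b (Finsupp.single (∅ : Finset V) (1:ℤ)) = Finsupp.single ∅ 1 := by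
        rw [subdiv_single b ∅ (by simp : (∅ : Finset V).card = 0)]
        simp only [Finset.univ_unique, Finset.sum_singleton]
        rw [show (default : Equiv.Perm (Fin 0)) = 1 from Subsingleton.elim _ _]
        simp [tupleChain_nil]
      rw [hbd, map_zero, hsub, hbd]
    · have hsupp : ∀ t ∈ (subdiv b (simplicialBoundary (Finsupp.single s (1:ℤ)))).support,
          t.card = k := by
        intro t ht
        rw [bd_single, map_sum] at ht
        have h1 := Finsupp.support_finset_sum ht
        rw [Finset.mem_biUnion] at h1
        obtain ⟨v, hv, htv⟩ := h1
        rw [map_smul] at htv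
        have h2 := Finsupp.support_smul htv
        have h3 := subdiv_support_card b (s.erase v) t h2
        rw [Finset.card_erase_of_mem hv, hn] at h3
        simpa using h3
      have hz : simplicialBoundary (subdiv b (simplicialBoundary (Finsupp.single s (1:ℤ)))) = 0 := by
        have hstep : simplicialBoundary (subdiv b (simplicialBoundary (Finsupp.single s (1:ℤ))))
            = subdiv b (simplicialBoundary (simplicialBoundary (Finsupp.single s 1))) := by
          rw [bd_single]
          simp only [map_sum, map_smul]
          refine Finset.sum_congr rfl fun v hv => ?_
          rw [ih k (by omega) (s.erase v) (by rw [Finset.card_erase_of_mem hv, hn]; omega)]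
        rw [hstep, bd_bd, map_zero]
      rw [subdiv_single_cone b s hn, map_smul, bd_cone_homog (b s) k _ hsupp, hz, map_zero,
        add_zero, smul_smul, ← pow_add]
      rw [show ((-1:ℤ))^(k+k) = 1 from by
        rw [neg_one_pow_eq_pow_mod_two, show (k+k) % 2 = 0 from by omega, pow_zero]]
      rw [one_smul]

end Aux

/-- `S` is a chain map, `∂S = S∂`, on the (augmented) simplicial chains of a
simplicial complex `K` whose barycenter map `b` is compatible with `K`: `b` of
each member of a chain (under inclusion) of nonempty subsets of a simplex of `K`
assembles, when the values are distinct, to a simplex of `K`. -/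
theorem subdiv_comm_boundary {V : Type*} [LinearOrder V]
    (K : Set (Finset V))
    (hK₁ : ∀ s ∈ K, s.Nonempty)
    (hK₂ : ∀ s ∈ K, ∀ t ⊆ s, t.Nonempty → t ∈ K)
    (b : Finset V → V)
    (hb : ∀ s ∈ K, ∀ l : List (Finset V), l ≠ [] → l.Chain' (· ⊆ ·) →
      (∀ t ∈ l, t.Nonempty ∧ t ⊆ s) → (l.map b).Nodup → (l.map b).toFinset ∈ K)
    (c : Finset V →₀ ℤ) (hc : ∀ s ∈ c.support, s ∈ K ∨ s = ∅) :
    simplicialBoundary (subdiv b c) = subdiv b (simplicialBoundary c) := by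
  clear hc hb hK₁ hK₂
  induction c using Finsupp.induction_linear with
  | zero => simp
  | add f g hf hg => rw [map_add, map_add, map_add, map_add, hf, hg]
  | single s m =>
      have h1 : Finsupp.single s m = m • Finsupp.single s (1 : ℤ) := by
        rw [Finsupp.smul_single, smul_eq_mul, mul_one]
      rw [h1, map_smul, map_smul, map_smul, map_smul, key b s.card s rfl]
end

section
/- If two cochains α and β on a complex satisfy α − β = δ̌ γ for the Čech coboundary δ̌ and some cochain γ, then α and β define the same Čech cohomology class; applied here: for a cocycle α ∈ C^k_Δ(NU) and homotopy T with T∂ + ∂T = id − S, the two Čech cochains (α(ι∘(x_{i_0}⋯x_{i_k})))_i and (α(ι∘S(x_{i_0}⋯x_{i_k})))_i differ by the Čech coboundary of ((α(ι∘T(x_{j_0}⋯x_{j_{k-1}})))_j), hence are cohomologous. -/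
open Finset

/-- The (contravariant) Čech coboundary of a cochain `F` on index sets:
`(δ̌F)(i) = Σ_{l} (−1)^l F(i \ {i_l})`. -/
noncomputable def cechCoboundary {V : Type*} [LinearOrder V]
    (F : Finset V → ℤ) (s : Finset V) : ℤ :=
  ∑ v ∈ s, posSign (s.erase v) v * F (s.erase v)

/-- Two cochains differing by a Čech coboundary are cohomologous; applied here:
let `φ` be the evaluation `c ↦ α(ι ∘ c)` of a singular `k`-cocycle `α` on pushed
forward simplicial chains of the nerve (so `φ` kills boundaries since `α` is a
cocycle and `ι_*` is a chain map), and let `T` be a homotopy with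
`T∂ + ∂T = id − S` on simplicial chains.  Then the Čech cochains
`i ↦ α(ι∘(x_{i_0}⋯x_{i_k})) = φ(i)` and `i ↦ α(ι∘S(x_{i_0}⋯x_{i_k})) = φ(S i)`
differ exactly by the Čech coboundary of `j ↦ α(ι∘T(x_{j_0}⋯x_{j_{k-1}})) = φ(T j)`,
hence define the same Čech cohomology class. -/
theorem cochains_cohomologous_via_homotopy {V : Type*} [LinearOrder V]
    (b : Finset V → V)
    (φ : (Finset V →₀ ℤ) →ₗ[ℤ] ℤ)
    (hφ : ∀ c : Finset V →₀ ℤ, φ (simplicialBoundary c) = 0)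
    (T : (Finset V →₀ ℤ) →ₗ[ℤ] (Finset V →₀ ℤ))
    (hT : ∀ c : Finset V →₀ ℤ,
      T (simplicialBoundary c) + simplicialBoundary (T c) = c - subdiv b c) :
    ((fun s : Finset V => φ (Finsupp.single s 1) - φ (subdiv b (Finsupp.single s 1)))
      = cechCoboundary (fun t => φ (T (Finsupp.single t 1)))) ∧
    ∃ γ : Finset V → ℤ,
      (fun s : Finset V => φ (Finsupp.single s 1))
        - (fun s : Finset V => φ (subdiv b (Finsupp.single s 1)))
      = cechCoboundary γ := by
  have key : ∀ s : Finset V,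
      φ (Finsupp.single s 1) - φ (subdiv b (Finsupp.single s 1))
        = cechCoboundary (fun t => φ (T (Finsupp.single t 1))) s := by
    intro s
    have h1 : φ (Finsupp.single s 1) - φ (subdiv b (Finsupp.single s 1))
        = φ (T (simplicialBoundary (Finsupp.single s 1))) := by
      have := congrArg φ (hT (Finsupp.single s 1))
      simp only [map_add, map_sub, hφ] at this
      linarith
    rw [h1]
    have h2 : simplicialBoundary (Finsupp.single s 1)
        = ∑ v ∈ s, posSign (s.erase v) v • Finsupp.single (s.erase v) (1:ℤ) := by
      simp [simplicialBoundary, Finsupp.lsum_single, LinearMap.toSpanSingleton_apply]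
    rw [h2, map_sum, map_sum, cechCoboundary]
    refine Finset.sum_congr rfl fun v _ => ?_
    rw [map_zsmul, map_zsmul]
    simp [smul_eq_mul]
  refine ⟨funext key, fun t => φ (T (Finsupp.single t 1)), ?_⟩
  funext s
  simpa using key s
end

section
/- Iterating the described diagram chase for a saturated cover: for the generator e_i of the i-th summand of ⊕_{|i|=k} ℤ (the degree-(k,−1) position), the chain (∂̌ ∘ C)^{k+1}(e_i) ∈ C^Δ_k(NU) equals the sum over all permutations σ of {0,…,k} of sgn(σ) times the simplex (x_{b({i_{σ(k)}})}, x_{b({i_{σ(k)},i_{σ(k−1)}})}, …, x_{b({i_{σ(k)},…,i_{σ(0)}})}); equivalently it equals (−1)^{k(k+1)/2} times the barycentric subdivision chain S applied to (x_{i_0}⋯x_{i_k}). -/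
open Finset

/-- Elements of `⊕_{j} C^Δ_*(NU_j)`: formal `ℤ`-combinations of pairs
`(j, s)` where `j` is the Čech index set and `s` the simplex (`s = ∅` is the
augmentation generator of the `j`-summand). -/
noncomputable def cechDown {V : Type*} [LinearOrder V] :
    ((Finset V × Finset V) →₀ ℤ) →ₗ[ℤ] ((Finset V × Finset V) →₀ ℤ) :=
  Finsupp.lsum ℤ fun p => LinearMap.toSpanSingleton ℤ _
    (∑ a ∈ p.1, posSign (p.1.erase a) a • Finsupp.single (p.1.erase a, p.2) 1)

/-- The componentwise cone operators `C_{x_{b(j)}}` on `⊕_j C^Δ_*(NU_j)`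
(including the augmentation `z ↦ z·(x_{b(j)})`). -/
noncomputable def coneAll {V : Type*} [LinearOrder V] (b : Finset V → V) :
    ((Finset V × Finset V) →₀ ℤ) →ₗ[ℤ] ((Finset V × Finset V) →₀ ℤ) :=
  Finsupp.lsum ℤ fun p => LinearMap.toSpanSingleton ℤ _
    (if b p.1 ∈ p.2 then 0
     else posSign p.2 (b p.1) • Finsupp.single (p.1, insert (b p.1) p.2) 1)

/-- The `n`-fold iterate of the diagram chase `∂̌ ∘ C`. -/
noncomputable def chase {V : Type*} [LinearOrder V] (b : Finset V → V) (n : ℕ) :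
    ((Finset V × Finset V) →₀ ℤ) → ((Finset V × Finset V) →₀ ℤ) :=
  (fun c => cechDown (coneAll b c))^[n]

/-- Embedding of simplicial chains as the `j = ∅` component. -/
noncomputable def embedChain {V : Type*} [LinearOrder V] :
    (Finset V →₀ ℤ) →ₗ[ℤ] ((Finset V × Finset V) →₀ ℤ) :=
  Finsupp.lmapDomain ℤ ℤ (fun s => ((∅ : Finset V), s))

section DiagramChaseAux

variable {ι : Type*} [LinearOrder ι]

open Equiv Finset

lemma posSign_of_forall_le {T : Finset ι} {v : ι} (h : ∀ t ∈ T, v ≤ t) :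
    posSign T v = 1 := by
  unfold posSign
  rw [Finset.filter_false_of_mem, Finset.card_empty, pow_zero]
  exact fun t ht => not_lt.2 (h t ht)

lemma posSign_erase (s : Finset ι) (a : ι) : posSign (s.erase a) a = posSign s a := by
  unfold posSign
  congr 2
  ext y
  simp only [Finset.mem_filter, Finset.mem_erase]
  exact ⟨fun ⟨⟨_, hy⟩, hlt⟩ => ⟨hy, hlt⟩, fun ⟨hy, hlt⟩ => ⟨⟨ne_of_lt hlt, hy⟩, hlt⟩⟩

lemma coneAll_single (b : Finset ι → ι) (p : Finset ι × Finset ι) :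
    coneAll b (Finsupp.single p 1) =
      if b p.1 ∈ p.2 then 0
      else posSign p.2 (b p.1) • Finsupp.single (p.1, insert (b p.1) p.2) 1 := by
  simp [coneAll, Finsupp.lsum_single, LinearMap.toSpanSingleton_apply_one]

lemma cechDown_single (p : Finset ι × Finset ι) :
    cechDown (Finsupp.single p 1) =
      ∑ a ∈ p.1, posSign (p.1.erase a) a • Finsupp.single (p.1.erase a, p.2) 1 := by
  simp [cechDown, Finsupp.lsum_single, LinearMap.toSpanSingleton_apply_one]

lemma chase_eq_pow (b : Finset ι → ι) (n : ℕ) (x : (Finset ι × Finset ι) →₀ ℤ) :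
    chase b n x = ((cechDown.comp (coneAll b)) ^ n) x := by
  induction n generalizing x with
  | zero => rfl
  | succ n ih =>
    rw [chase, Function.iterate_succ_apply]
    rw [show (fun c => cechDown (coneAll b c))^[n] (cechDown (coneAll b x))
        = ((cechDown.comp (coneAll b)) ^ n) (cechDown (coneAll b x)) from ih _]
    rw [pow_succ, Module.End.mul_apply, LinearMap.comp_apply]

lemma image_univ_orderEmb {s : Finset ι} {n : ℕ} (h : s.card = n) (σ : Equiv.Perm (Fin n)) :
    (Finset.univ.image fun m => s.orderEmbOfFin h (σ m)) = s := by
  ext y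
  simp only [Finset.mem_image, Finset.mem_univ, true_and]
  constructor
  · rintro ⟨m, rfl⟩; exact Finset.orderEmbOfFin_mem s h (σ m)
  · intro hy
    have : y ∈ Set.range (s.orderEmbOfFin h) := by
      rw [Finset.range_orderEmbOfFin]; exact hy
    obtain ⟨q, hq⟩ := this
    exact ⟨σ⁻¹ q, by simp [hq]⟩

lemma orderEmb_erase {s : Finset ι} {n : ℕ} (h : s.card = n + 1) (p : Fin (n + 1))
    (h' : (s.erase (s.orderEmbOfFin h p)).card = n) (q : Fin n) :
    (s.erase (s.orderEmbOfFin h p)).orderEmbOfFin h' q = s.orderEmbOfFin h (p.succAbove q) := by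
  have key : (fun q : Fin n => s.orderEmbOfFin h (p.succAbove q)) =
      ⇑((s.erase (s.orderEmbOfFin h p)).orderEmbOfFin h') := by
    apply Finset.orderEmbOfFin_unique h'
    · intro q
      refine Finset.mem_erase.2 ⟨?_, Finset.orderEmbOfFin_mem s h _⟩
      intro hEq
      exact (Fin.succAbove_ne p q) ((s.orderEmbOfFin h).injective hEq)
    · exact (s.orderEmbOfFin h).strictMono.comp (Fin.strictMono_succAbove p)
  exact (congrFun key q).symm

lemma card_filter_lt_orderEmb {s : Finset ι} {n : ℕ} (h : s.card = n) (p : Fin n) :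
    (s.filter (· < s.orderEmbOfFin h p)).card = (p : ℕ) := by
  have himg : s.filter (· < s.orderEmbOfFin h p)
      = Finset.image (fun q => s.orderEmbOfFin h q) (Finset.univ.filter (· < p)) := by
    ext y
    simp only [Finset.mem_filter, Finset.mem_image, Finset.mem_univ, true_and]
    constructor
    · rintro ⟨hy, hlt⟩
      have : y ∈ Set.range (s.orderEmbOfFin h) := by
        rw [Finset.range_orderEmbOfFin]; exact hy
      obtain ⟨q, rfl⟩ := this
      exact ⟨q, (s.orderEmbOfFin h).strictMono.lt_iff_lt.1 hlt, rfl⟩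
    · rintro ⟨q, hq, rfl⟩
      exact ⟨Finset.orderEmbOfFin_mem s h q, (s.orderEmbOfFin h).strictMono hq⟩
  rw [himg, Finset.card_image_of_injective _ (s.orderEmbOfFin h).injective]
  rw [show Finset.univ.filter (· < p) = Finset.Iio p by ext q; simp, Fin.card_Iio]

/-- The permutation of `Fin (n+1)` sending `0` to `p` and `m.succ` to `p.succAbove (τ m)`. -/
def insPerm {n : ℕ} (p : Fin (n + 1)) (τ : Equiv.Perm (Fin n)) : Equiv.Perm (Fin (n + 1)) :=
  p.cycleRange.symm * Equiv.Perm.decomposeFin.symm (0, τ)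

lemma insPerm_zero {n : ℕ} (p : Fin (n + 1)) (τ : Equiv.Perm (Fin n)) :
    insPerm p τ 0 = p := by
  simp [insPerm, Equiv.Perm.mul_apply, Fin.cycleRange_symm_zero]

lemma insPerm_succ {n : ℕ} (p : Fin (n + 1)) (τ : Equiv.Perm (Fin n)) (m : Fin n) :
    insPerm p τ m.succ = p.succAbove (τ m) := by
  simp [insPerm, Equiv.Perm.mul_apply, Equiv.Perm.decomposeFin_symm_apply_succ,
    Equiv.swap_self, Fin.cycleRange_symm_succ]

lemma sign_insPerm {n : ℕ} (p : Fin (n + 1)) (τ : Equiv.Perm (Fin n)) :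
    Equiv.Perm.sign (insPerm p τ) = (-1) ^ (p : ℕ) * Equiv.Perm.sign τ := by
  simp [insPerm, Equiv.Perm.sign_symm, Fin.sign_cycleRange,
    Equiv.Perm.decomposeFin.symm_sign]

lemma insPerm_bijective {n : ℕ} :
    Function.Bijective (fun pt : Fin (n + 1) × Equiv.Perm (Fin n) => insPerm pt.1 pt.2) := by
  rw [Fintype.bijective_iff_injective_and_card]
  constructor
  · rintro ⟨p, τ⟩ ⟨p', τ'⟩ hEq
    simp only at hEq
    have hp : p = p' := by
      have h0 := DFunLike.congr_fun hEq 0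
      rwa [insPerm_zero, insPerm_zero] at h0
    subst hp
    have h2 : Equiv.Perm.decomposeFin.symm (0, τ) = Equiv.Perm.decomposeFin.symm (0, τ') :=
      mul_left_cancel hEq
    have h3 := Equiv.Perm.decomposeFin.symm.injective h2
    simp only [Prod.mk.injEq] at h3
    exact Prod.ext rfl h3.2
  · simp [Fintype.card_perm, Nat.factorial_succ]

lemma revPerm_eq_insPerm (n : ℕ) :
    (Fin.revPerm : Equiv.Perm (Fin (n + 1))) = insPerm (Fin.last n) Fin.revPerm := by
  ext m
  induction m using Fin.cases with
  | zero =>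
    rw [insPerm_zero]
    simp [Fin.revPerm_apply, Fin.ext_iff, Fin.val_rev]
  | succ m' =>
    rw [insPerm_succ]
    simp only [Fin.revPerm_apply, Fin.succAbove_last, Fin.ext_iff, Fin.val_rev,
      Fin.coe_castSucc, Fin.val_succ]
    omega

lemma sign_revPerm : ∀ n : ℕ,
    Equiv.Perm.sign (Fin.revPerm : Equiv.Perm (Fin n)) = (-1) ^ (n * (n - 1) / 2)
  | 0 => by
    have : (Fin.revPerm : Equiv.Perm (Fin 0)) = 1 := Subsingleton.elim _ _
    simp [this]
  | n + 1 => by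
    rw [revPerm_eq_insPerm, sign_insPerm, sign_revPerm n, Fin.val_last, ← pow_add]
    congr 1
    rw [Nat.triangle_succ]
    omega

lemma inversions_eq_zero_of_monotone {n : ℕ} {f : Fin n → ι}
    (hf : ∀ p q : Fin n, (p : ℕ) ≤ (q : ℕ) → f p ≤ f q) :
    inversions (List.ofFn f) = 0 := by
  rw [inversions, Finset.card_eq_zero, Finset.filter_eq_empty_iff]
  rintro ⟨p1, p2⟩ -
  simp only [List.get_ofFn]
  rintro ⟨hlt, hgt⟩
  exact absurd (hf _ _ (by simpa [Fin.lt_def] using hlt.le)) (not_le.2 hgt)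

lemma tupleChain_eq_of_mono {n : ℕ} {f : Fin n → ι}
    (hf : ∀ p q : Fin n, (p : ℕ) ≤ (q : ℕ) → f p ≤ f q) :
    tupleChain (List.ofFn f) =
      if (List.ofFn f).Nodup then Finsupp.single (List.ofFn f).toFinset 1 else 0 := by
  rw [tupleChain, inversions_eq_zero_of_monotone hf, pow_zero, one_smul]

/-- The flag list of barycenters associated with a permutation. -/
noncomputable def flagList (b : Finset ι → ι) {n : ℕ} (s : Finset ι) (h : s.card = n)
    (σ : Equiv.Perm (Fin n)) : List ι :=
  List.ofFn fun j : Fin n =>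
    b ((Finset.univ.filter fun m : Fin n => n - 1 - (j : ℕ) ≤ (m : ℕ)).image
        fun m => s.orderEmbOfFin h (σ m))

lemma flagList_entry_mono (b : Finset ι → ι)
    (hbmono : ∀ s t : Finset ι, s ⊆ t → b s ≤ b t) {n : ℕ} (s : Finset ι)
    (h : s.card = n) (σ : Equiv.Perm (Fin n)) (j j' : Fin n) (hjj : (j : ℕ) ≤ (j' : ℕ)) :
    b ((Finset.univ.filter fun m : Fin n => n - 1 - (j : ℕ) ≤ (m : ℕ)).image
        fun m => s.orderEmbOfFin h (σ m))
    ≤ b ((Finset.univ.filter fun m : Fin n => n - 1 - (j' : ℕ) ≤ (m : ℕ)).image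
        fun m => s.orderEmbOfFin h (σ m)) := by
  apply hbmono
  apply Finset.image_subset_image
  intro m hm
  simp only [Finset.mem_filter, Finset.mem_univ, true_and] at *
  omega

lemma flagList_mem_le (b : Finset ι → ι)
    (hbmono : ∀ s t : Finset ι, s ⊆ t → b s ≤ b t) {n : ℕ} (s : Finset ι)
    (h : s.card = n) (σ : Equiv.Perm (Fin n)) :
    ∀ v ∈ flagList b s h σ, v ≤ b s := by
  rw [flagList, List.forall_mem_ofFn_iff]
  intro j
  apply hbmono
  intro y hy
  simp only [Finset.mem_image] at hy
  obtain ⟨m, -, rfl⟩ := hy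
  exact Finset.orderEmbOfFin_mem s h _

end DiagramChaseAux

section DiagramChaseMain

variable {ι : Type*} [LinearOrder ι]

open Equiv Finset

lemma chase_main (b : Finset ι → ι) (hbmono : ∀ s t : Finset ι, s ⊆ t → b s ≤ b t) :
    ∀ (n : ℕ) (s : Finset ι) (h : s.card = n) (T : Finset ι), (∀ t ∈ T, b s ≤ t) →
    ((cechDown.comp (coneAll b)) ^ n) (Finsupp.single (s, T) 1) =
      ∑ σ : Equiv.Perm (Fin n), (Equiv.Perm.sign σ : ℤ) •
        (if (flagList b s h σ).Nodup ∧ ∀ v ∈ flagList b s h σ, v ∉ T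
         then Finsupp.single ((∅ : Finset ι), T ∪ (flagList b s h σ).toFinset) (1 : ℤ)
         else 0) := by
  intro n
  induction n with
  | zero =>
    intro s h T hT
    have hs : s = ∅ := Finset.card_eq_zero.1 h
    subst hs
    haveI : Subsingleton (Equiv.Perm (Fin 0)) :=
      ⟨fun a b => Equiv.ext fun x => x.elim0⟩
    rw [pow_zero, Module.End.one_apply, Fintype.sum_subsingleton _ (1 : Equiv.Perm (Fin 0))]
    simp [flagList, List.ofFn_zero]
  | succ n ih =>
    intro s h T hT
    have hmem : ∀ p : Fin (n + 1), s.orderEmbOfFin h p ∈ s :=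
      fun p => Finset.orderEmbOfFin_mem s h p
    have h' : ∀ p : Fin (n + 1), (s.erase (s.orderEmbOfFin h p)).card = n := by
      intro p
      rw [Finset.card_erase_of_mem (hmem p), h]
      omega
    have htop : ∀ σ : Equiv.Perm (Fin (n + 1)),
        b ((Finset.univ.filter fun m : Fin (n + 1) =>
              n + 1 - 1 - ((Fin.last n : Fin (n + 1)) : ℕ) ≤ (m : ℕ)).image
            fun m => s.orderEmbOfFin h (σ m)) = b s := by
      intro σ
      rw [show (Finset.univ.filter fun m : Fin (n + 1) =>
            n + 1 - 1 - ((Fin.last n : Fin (n + 1)) : ℕ) ≤ (m : ℕ)) = Finset.univ by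
          ext m; simp [Fin.val_last]]
      rw [image_univ_orderEmb h σ]
    have hbs_mem_flag : ∀ σ : Equiv.Perm (Fin (n + 1)), b s ∈ flagList b s h σ := by
      intro σ
      rw [flagList, List.mem_ofFn]
      exact ⟨Fin.last n, htop σ⟩
    rw [pow_succ, Module.End.mul_apply, LinearMap.comp_apply, coneAll_single]
    by_cases hbT : b s ∈ T
    · rw [if_pos hbT, map_zero, map_zero]
      symm
      apply Finset.sum_eq_zero
      intro σ _
      rw [if_neg, smul_zero]
      rintro ⟨-, hforall⟩
      exact hforall (b s) (hbs_mem_flag σ) hbT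
    · rw [if_neg hbT, posSign_of_forall_le hT, one_smul, cechDown_single]
      set T' : Finset ι := insert (b s) T with hT'def
      rw [map_sum]
      have hsum1 : ∑ a ∈ s, (cechDown.comp (coneAll b) ^ n)
            (posSign (s.erase a) a • Finsupp.single (s.erase a, T') 1)
          = ∑ p : Fin (n + 1), ((-1 : ℤ) ^ (p : ℕ)) •
              ((cechDown.comp (coneAll b)) ^ n)
                (Finsupp.single (s.erase (s.orderEmbOfFin h p), T') 1) := by
        refine (Finset.sum_bij (fun p (_ : p ∈ Finset.univ) => s.orderEmbOfFin h p)
          (fun p _ => hmem p) (fun p _ q _ hpq => (s.orderEmbOfFin h).injective hpq)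
          ?_ ?_).symm
        · intro a ha
          have : a ∈ Set.range (s.orderEmbOfFin h) := by
            rw [Finset.range_orderEmbOfFin]; exact ha
          obtain ⟨p, rfl⟩ := this
          exact ⟨p, Finset.mem_univ p, rfl⟩
        · intro p _
          rw [map_smul]
          congr 1
          rw [posSign_erase]
          unfold posSign
          rw [card_filter_lt_orderEmb h p]
      rw [hsum1]
      have hTle : ∀ p : Fin (n + 1), ∀ t ∈ T', b (s.erase (s.orderEmbOfFin h p)) ≤ t := by
        intro p t ht
        have hle : b (s.erase (s.orderEmbOfFin h p)) ≤ b s :=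
          hbmono _ _ (Finset.erase_subset _ _)
        rcases Finset.mem_insert.1 ht with rfl | ht
        · exact hle
        · exact le_trans hle (hT t ht)
      have hstep : ∑ p : Fin (n + 1), ((-1 : ℤ) ^ (p : ℕ)) •
            ((cechDown.comp (coneAll b)) ^ n)
              (Finsupp.single (s.erase (s.orderEmbOfFin h p), T') 1)
          = ∑ p : Fin (n + 1), ((-1 : ℤ) ^ (p : ℕ)) •
              ∑ τ : Equiv.Perm (Fin n), (Equiv.Perm.sign τ : ℤ) •
                (if (flagList b (s.erase (s.orderEmbOfFin h p)) (h' p) τ).Nodup ∧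
                    ∀ v ∈ flagList b (s.erase (s.orderEmbOfFin h p)) (h' p) τ, v ∉ T'
                 then Finsupp.single ((∅ : Finset ι),
                    T' ∪ (flagList b (s.erase (s.orderEmbOfFin h p)) (h' p) τ).toFinset) (1 : ℤ)
                 else 0) :=
        Finset.sum_congr rfl fun p _ => by
          rw [ih (s.erase (s.orderEmbOfFin h p)) (h' p) T' (hTle p)]
      rw [hstep]
      rw [← Function.Bijective.sum_comp (insPerm_bijective (n := n))
        (fun σ => (Equiv.Perm.sign σ : ℤ) •
          (if (flagList b s h σ).Nodup ∧ ∀ v ∈ flagList b s h σ, v ∉ T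
           then Finsupp.single ((∅ : Finset ι), T ∪ (flagList b s h σ).toFinset) (1 : ℤ)
           else 0))]
      rw [Fintype.sum_prod_type]
      apply Finset.sum_congr rfl
      intro p _
      rw [Finset.smul_sum]
      apply Finset.sum_congr rfl
      intro τ _
      set L : List ι := flagList b (s.erase (s.orderEmbOfFin h p)) (h' p) τ with hL
      have hval : ∀ m' : Fin n,
          (s.erase (s.orderEmbOfFin h p)).orderEmbOfFin (h' p) (τ m')
            = s.orderEmbOfFin h (insPerm p τ m'.succ) := by
        intro m'
        rw [insPerm_succ, orderEmb_erase h p (h' p)]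
      have hconcat : flagList b s h (insPerm p τ) = L.concat (b s) := by
        rw [hL, flagList, flagList, List.ofFn_succ']
        congr 1
        · refine congrArg List.ofFn (funext fun j => ?_)
          congr 1
          ext y
          simp only [Finset.mem_image, Finset.mem_filter, Finset.mem_univ, true_and,
            Fin.coe_castSucc]
          constructor
          · rintro ⟨m, hm, rfl⟩
            have hm0 : m ≠ 0 := by
              intro h0; subst h0
              simp only [Fin.val_zero] at hm
              have := j.isLt
              omega
            obtain ⟨m', rfl⟩ : ∃ m', m = m'.succ :=
              ⟨m.pred hm0, (Fin.succ_pred m hm0).symm⟩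
            refine ⟨m', ?_, (hval m').symm ▸ rfl⟩
            · have := j.isLt
              simp only [Fin.val_succ] at hm
              omega
          · rintro ⟨m', hm', rfl⟩
            refine ⟨m'.succ, ?_, (hval m').symm⟩
            simp only [Fin.val_succ]
            omega
        · rw [htop]
      have hiff : ((L.concat (b s)).Nodup ∧ ∀ v ∈ L.concat (b s), v ∉ T)
          ↔ (L.Nodup ∧ ∀ v ∈ L, v ∉ T') := by
        simp only [List.concat_eq_append, List.nodup_append, List.nodup_singleton,
          List.disjoint_singleton, List.mem_append, List.mem_singleton, true_and]
        constructor
        · rintro ⟨⟨hnd, hbsL⟩, hvT⟩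
          refine ⟨hnd, fun v hv hvT' => ?_⟩
          rcases Finset.mem_insert.1 hvT' with rfl | hvt
          · exact hbsL _ hv _ rfl rfl
          · exact hvT v (Or.inl hv) hvt
        · rintro ⟨hnd, hvT'⟩
          refine ⟨⟨hnd, fun x hx y hy hxy => hvT' x hx (by subst hy hxy; exact Finset.mem_insert_self _ _)⟩, ?_⟩
          rintro v (hv | rfl)
          · exact fun hvt => hvT' v hv (Finset.mem_insert_of_mem hvt)
          · exact hbT
      rw [hconcat, sign_insPerm]
      by_cases hc : L.Nodup ∧ ∀ v ∈ L, v ∉ T'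
      · rw [if_pos (hiff.2 hc), if_pos hc]
        rw [show T ∪ (L.concat (b s)).toFinset = T' ∪ L.toFinset by
          ext y
          simp only [List.concat_eq_append, List.toFinset_append, Finset.mem_union,
            List.toFinset_cons, List.toFinset_nil, insert_empty_eq, Finset.mem_insert,
            List.mem_toFinset, hT'def, Finset.mem_singleton]
          tauto]
        rw [smul_smul]
        congr 1
      · rw [if_neg (fun hx => hc (hiff.1 hx)), if_neg hc]
        simp

end DiagramChaseMain

section DiagramChaseFinal

variable {ι : Type*} [LinearOrder ι]

open Equiv Finset

lemma embedChain_single (A : Finset ι) (z : ℤ) :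
    embedChain (Finsupp.single A z) = Finsupp.single ((∅ : Finset ι), A) z := by
  simp [embedChain, Finsupp.lmapDomain_apply, Finsupp.mapDomain_single]

lemma subdiv_single_eq (b : Finset ι → ι) {i : Finset ι} {n : ℕ} (hcard : i.card = n) :
    subdiv b (Finsupp.single i 1) =
      ∑ σ : Equiv.Perm (Fin n), (Equiv.Perm.sign σ : ℤ) •
        tupleChain (List.ofFn fun j : Fin n =>
          b ((Finset.univ.filter (· ≤ j)).image fun m => i.orderEmbOfFin hcard (σ m))) := by
  subst hcard
  simp only [subdiv, Finsupp.lsum_single, LinearMap.toSpanSingleton_apply_one]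
  rfl

end DiagramChaseFinal


/-- Iterated diagram chase for a saturated ordered good cover `U` with
barycenter map `b` (so `U (b j) = U_j` for nonempty intersections, `b {a} = a`,
and `b` is monotone with respect to the ordering convention of the cover):
for the generator `e_i` of the `i`-th summand (position `(k, −1)`),
`(∂̌C)^{k+1}(e_i)` equals the sum over all permutations `σ` of `{0,…,k}` of
`sgn(σ)` times the flag simplex
`(x_{b({i_{σ(k)}})}, x_{b({i_{σ(k)},i_{σ(k−1)}})}, …, x_{b({i_{σ(k)},…,i_{σ(0)}})})`,
equivalently `(−1)^{k(k+1)/2}` times the barycentric subdivision `S(x_{i_0}⋯x_{i_k})`. -/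
theorem chase_eq_signed_subdivision {X ι : Type*} [TopologicalSpace X]
    [LinearOrder ι] (U : ι → Set X) (hUopen : ∀ a, IsOpen (U a))
    (hsat : ∀ s : Finset ι, s.Nonempty → (⋂ a ∈ s, U a).Nonempty →
      ∃ j, (⋂ a ∈ s, U a) = U j)
    (b : Finset ι → ι)
    (hb : ∀ j : Finset ι, j.Nonempty → (⋂ a ∈ j, U a).Nonempty →
      U (b j) = ⋂ a ∈ j, U a)
    (hbsingle : ∀ a : ι, b {a} = a)
    (hbmono : ∀ s t : Finset ι, s ⊆ t → b s ≤ b t)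
    (k : ℕ) (i : Finset ι) (hcard : i.card = k + 1)
    (hine : (⋂ a ∈ i, U a).Nonempty) :
    chase b (k + 1) (Finsupp.single (i, (∅ : Finset ι)) 1)
      = ∑ σ : Equiv.Perm (Fin (k + 1)),
          ((Equiv.Perm.sign σ : ℤ)) • embedChain (tupleChain
            (List.ofFn fun j : Fin (k + 1) =>
              b ((Finset.univ.filter fun m : Fin (k + 1) => k - (j : ℕ) ≤ (m : ℕ)).image
                fun m => ((i.orderIsoOfFin hcard) (σ m) : ι)))) ∧
    chase b (k + 1) (Finsupp.single (i, (∅ : Finset ι)) 1)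
      = ((-1 : ℤ) ^ (k * (k + 1) / 2)) • embedChain (subdiv b (Finsupp.single i 1)) := by
  classical
  -- the theorem's flag list is our `flagList`
  have hflag_eq : ∀ σ : Equiv.Perm (Fin (k + 1)),
      (List.ofFn fun j : Fin (k + 1) =>
        b ((Finset.univ.filter fun m : Fin (k + 1) => k - (j : ℕ) ≤ (m : ℕ)).image
          fun m => ((i.orderIsoOfFin hcard) (σ m) : ι)))
      = flagList b i hcard σ := by
    intro σ
    rfl
  -- first equality
  have h1 : chase b (k + 1) (Finsupp.single (i, (∅ : Finset ι)) 1)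
      = ∑ σ : Equiv.Perm (Fin (k + 1)), ((Equiv.Perm.sign σ : ℤ)) •
          embedChain (tupleChain (flagList b i hcard σ)) := by
    rw [chase_eq_pow, chase_main b hbmono (k + 1) i hcard ∅ (by simp)]
    apply Finset.sum_congr rfl
    intro σ _
    congr 1
    rw [flagList, tupleChain_eq_of_mono (flagList_entry_mono b hbmono i hcard σ),
      apply_ite embedChain, map_zero, embedChain_single]
    simp only [Finset.notMem_empty, not_false_iff, implies_true, and_true,
      Finset.empty_union]
  have hfirst : chase b (k + 1) (Finsupp.single (i, (∅ : Finset ι)) 1)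
      = ∑ σ : Equiv.Perm (Fin (k + 1)),
          ((Equiv.Perm.sign σ : ℤ)) • embedChain (tupleChain
            (List.ofFn fun j : Fin (k + 1) =>
              b ((Finset.univ.filter fun m : Fin (k + 1) => k - (j : ℕ) ≤ (m : ℕ)).image
                fun m => ((i.orderIsoOfFin hcard) (σ m) : ι)))) := by
    rw [h1]
    exact Finset.sum_congr rfl fun σ _ => by rw [hflag_eq σ]
  refine ⟨hfirst, ?_⟩
  -- second equality
  have hexp : (k + 1) * (k + 1 - 1) / 2 = k * (k + 1) / 2 := by
    rw [Nat.add_sub_cancel, Nat.mul_comm]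
  have hsub : embedChain (subdiv b (Finsupp.single i 1))
      = ∑ σ : Equiv.Perm (Fin (k + 1)), (Equiv.Perm.sign σ : ℤ) •
          embedChain (tupleChain (List.ofFn fun j : Fin (k + 1) =>
            b ((Finset.univ.filter (· ≤ j)).image fun m => i.orderEmbOfFin hcard (σ m)))) := by
    rw [subdiv_single_eq b hcard, map_sum]
    exact Finset.sum_congr rfl fun σ _ => by rw [map_smul]
  rw [h1, hsub, Finset.smul_sum]
  rw [← Equiv.sum_comp (Equiv.mulRight (Fin.revPerm : Equiv.Perm (Fin (k + 1))))
    (fun σ₀ => ((Equiv.Perm.sign σ₀ : ℤ)) • embedChain (tupleChain (flagList b i hcard σ₀)))]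
  apply Finset.sum_congr rfl
  intro σ _
  simp only [Equiv.coe_mulRight]
  have hlist : flagList b i hcard (σ * Fin.revPerm)
      = List.ofFn fun j : Fin (k + 1) =>
          b ((Finset.univ.filter (· ≤ j)).image fun m => i.orderEmbOfFin hcard (σ m)) := by
    rw [flagList]
    refine congrArg List.ofFn (funext fun j => ?_)
    congr 1
    ext z
    simp only [Finset.mem_image, Finset.mem_filter, Finset.mem_univ, true_and,
      Equiv.Perm.mul_apply, Fin.revPerm_apply]
    constructor
    · rintro ⟨m, hm, rfl⟩
      refine ⟨m.rev, ?_, rfl⟩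
      have h1 := m.isLt
      have h2 := j.isLt
      rw [Fin.le_def, Fin.val_rev]
      omega
    · rintro ⟨m', hm', rfl⟩
      refine ⟨m'.rev, ?_, by rw [Fin.rev_rev]⟩
      have h1 := m'.isLt
      have h2 := j.isLt
      rw [Fin.le_def] at hm'
      rw [Fin.val_rev]
      omega
  rw [hlist, Equiv.Perm.sign_mul, sign_revPerm]
  rw [smul_smul]
  congr 1
  push_cast
  rw [mul_comm, Nat.mul_comm (k + 1) k]
end

section
/- Dualization of the chase: if z ∈ ⊕_{|i|=k} ℤ(NU_i) is a covariant Čech cycle and α ∈ C^k_Δ(NU) a simplicial cocycle, then the Čech cochain i ↦ α((∂̌C)^{k+1}(e_i)) is a Čech cocycle (with respect to the contravariant Čech coboundary), and its class depends only on the class of α. -/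
open Finset

namespace DualChaseAux

variable {V : Type*} [LinearOrder V]

/-- Fiberwise simplicial boundary acting on the second coordinate. -/
noncomputable def down2 : ((Finset V × Finset V) →₀ ℤ) →ₗ[ℤ] ((Finset V × Finset V) →₀ ℤ) :=
  Finsupp.lsum ℤ fun p => LinearMap.toSpanSingleton ℤ _
    (∑ v ∈ p.2, posSign (p.2.erase v) v • Finsupp.single (p.1, p.2.erase v) 1)

/-- Projection to the second coordinate, as a linear map. -/
noncomputable def projL : ((Finset V × Finset V) →₀ ℤ) →ₗ[ℤ] (Finset V →₀ ℤ) :=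
  Finsupp.lmapDomain ℤ ℤ Prod.snd

lemma projL_eq (x : (Finset V × Finset V) →₀ ℤ) :
    Finsupp.mapDomain Prod.snd x = projL x := rfl

lemma down2_single (p : Finset V × Finset V) :
    down2 (Finsupp.single p 1) =
      ∑ v ∈ p.2, posSign (p.2.erase v) v • Finsupp.single (p.1, p.2.erase v) 1 := by
  simp [down2]

lemma cechDown_single (p : Finset V × Finset V) :
    cechDown (Finsupp.single p 1) =
      ∑ a ∈ p.1, posSign (p.1.erase a) a • Finsupp.single (p.1.erase a, p.2) 1 := by
  simp [cechDown]

lemma coneAll_single (b : Finset V → V) (p : Finset V × Finset V) :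
    coneAll b (Finsupp.single p 1) =
      (if b p.1 ∈ p.2 then 0
       else posSign p.2 (b p.1) • Finsupp.single (p.1, insert (b p.1) p.2) 1) := by
  simp [coneAll]

lemma simplicialBoundary_single (s : Finset V) :
    simplicialBoundary (Finsupp.single s 1) =
      ∑ v ∈ s, posSign (s.erase v) v • Finsupp.single (s.erase v) 1 := by
  simp [simplicialBoundary]

lemma posSign_sq (s : Finset V) (v : V) : posSign s v * posSign s v = 1 := by
  unfold posSign; rw [← pow_add]; exact Even.neg_one_pow ⟨_, rfl⟩

lemma posSign_insert (t : Finset V) (v x : V) (hv : v ∉ t) :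
    posSign (insert v t) x = (if v < x then -1 else 1) * posSign t x := by
  unfold posSign
  rw [filter_insert]
  by_cases h : v < x
  · rw [if_pos h, if_pos h, card_insert_of_notMem (fun hc => hv (mem_filter.mp hc).1), pow_succ]
    ring
  · rw [if_neg h, if_neg h, one_mul]

lemma sign_cancel (t : Finset V) (x v : V) (hx : x ∉ t) (hv : v ∉ t) (hne : x ≠ v) :
    posSign (insert v t) x * posSign (insert x t) v + posSign t v * posSign t x = 0 := by
  rw [posSign_insert t v x hv, posSign_insert t x v hx]
  rcases hne.lt_or_gt with h | h
  · rw [if_neg (asymm h), if_pos h]; ring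
  · rw [if_pos h, if_neg (asymm h)]; ring

lemma cone_homotopy_single (b : Finset V → V) (j s : Finset V) :
    down2 (coneAll b (Finsupp.single (j, s) 1)) + coneAll b (down2 (Finsupp.single (j, s) 1))
      = Finsupp.single (j, s) 1 := by
  rw [coneAll_single, down2_single]
  by_cases hx : b j ∈ s
  · rw [if_pos hx, map_zero, zero_add, map_sum]
    rw [Finset.sum_eq_single_of_mem (b j) hx (fun v hv hne => by
      rw [map_smul, coneAll_single,
        if_pos (Finset.mem_erase.mpr ⟨fun h => hne h.symm, hx⟩), smul_zero])]
    rw [map_smul, coneAll_single, if_neg (Finset.notMem_erase _ _)]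
    rw [smul_smul, posSign_sq, one_smul, Finset.insert_erase hx]
  · rw [if_neg hx]
    simp only [map_smul, map_sum, down2_single, coneAll_single]
    rw [Finset.sum_insert hx, Finset.erase_insert hx, smul_add, smul_smul, posSign_sq, one_smul,
      Finset.smul_sum, add_assoc, add_eq_left, ← Finset.sum_add_distrib]
    refine Finset.sum_eq_zero fun v hv => ?_
    have hvx : b j ≠ v := fun h => hx (h ▸ hv)
    have hx' : b j ∉ s.erase v := fun h => hx (Finset.mem_of_mem_erase h)
    rw [if_neg hx', Finset.erase_insert_of_ne hvx, smul_smul, smul_smul, ← add_smul]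
    have hcoef : posSign s (b j) * posSign (insert (b j) (s.erase v)) v
        + posSign (s.erase v) v * posSign (s.erase v) (b j) = 0 := by
      nth_rewrite 1 [← Finset.insert_erase hv]
      exact sign_cancel (s.erase v) (b j) v hx' (Finset.notMem_erase v s) hvx
    rw [hcoef, zero_smul]

lemma cone_homotopy (b : Finset V → V) (x : (Finset V × Finset V) →₀ ℤ) :
    down2 (coneAll b x) + coneAll b (down2 x) = x := by
  have h : (down2 ∘ₗ coneAll b + coneAll b ∘ₗ down2 :
      ((Finset V × Finset V) →₀ ℤ) →ₗ[ℤ] ((Finset V × Finset V) →₀ ℤ)) = LinearMap.id := by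
    refine Finsupp.lhom_ext' fun p => LinearMap.ext_ring ?_
    obtain ⟨j, s⟩ := p
    simpa using cone_homotopy_single b j s
  simpa using LinearMap.congr_fun h x

lemma comm_single (j s : Finset V) :
    cechDown (down2 (Finsupp.single ((j, s) : Finset V × Finset V) 1))
      = down2 (cechDown (Finsupp.single (j, s) 1)) := by
  rw [down2_single, cechDown_single, map_sum, map_sum]
  simp only [map_smul, cechDown_single, down2_single, Finset.smul_sum, smul_smul]
  rw [Finset.sum_comm]
  exact Finset.sum_congr rfl fun a _ => Finset.sum_congr rfl fun v _ => by rw [mul_comm]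

lemma down2_cechDown (x : (Finset V × Finset V) →₀ ℤ) :
    cechDown (down2 x) = down2 (cechDown x) := by
  have h : (cechDown ∘ₗ down2 :
      ((Finset V × Finset V) →₀ ℤ) →ₗ[ℤ] ((Finset V × Finset V) →₀ ℤ)) = down2 ∘ₗ cechDown := by
    refine Finsupp.lhom_ext' fun p => LinearMap.ext_ring ?_
    obtain ⟨j, s⟩ := p
    simpa using comm_single j s
  simpa using LinearMap.congr_fun h x

lemma sign_cancel' (t : Finset V) (x v : V) (hx : x ∉ t) (hv : v ∉ t) (hne : x ≠ v) :
    posSign (insert v t) x * posSign t v + posSign (insert x t) v * posSign t x = 0 := by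
  rw [posSign_insert t v x hv, posSign_insert t x v hx]
  rcases hne.lt_or_gt with h | h
  · rw [if_neg (asymm h), if_pos h]; ring
  · rw [if_pos h, if_neg (asymm h)]; ring

lemma cechDown_sq_single (j s : Finset V) :
    cechDown (cechDown (Finsupp.single ((j, s) : Finset V × Finset V) 1)) = 0 := by
  rw [cechDown_single, map_sum]
  simp only [map_smul, cechDown_single, Finset.smul_sum, smul_smul]
  rw [Finset.sum_sigma']
  refine Finset.sum_involution (fun q _ => ⟨q.2, q.1⟩) ?_ ?_ ?_ ?_
  · rintro ⟨a, a'⟩ hq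
    obtain ⟨ha, ha'⟩ := Finset.mem_sigma.mp hq
    simp only at ha ha' ⊢
    have hne : a' ≠ a := (Finset.mem_erase.mp ha').1
    have hcomm : (j.erase a').erase a = (j.erase a).erase a' := Finset.erase_right_comm
    rw [hcomm, ← add_smul]
    have hat : a ∉ (j.erase a).erase a' := fun h =>
      Finset.notMem_erase a j (Finset.mem_of_mem_erase h)
    have ha't : a' ∉ (j.erase a).erase a' := Finset.notMem_erase _ _
    have e1 : j.erase a = insert a' ((j.erase a).erase a') := (Finset.insert_erase ha').symm
    have e3 : j.erase a' = insert a ((j.erase a).erase a') := by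
      rw [← hcomm]
      exact (Finset.insert_erase (Finset.mem_erase.mpr ⟨fun h => hne h.symm, ha⟩)).symm
    have hcoef : posSign (j.erase a) a * posSign ((j.erase a).erase a') a'
        + posSign (j.erase a') a' * posSign ((j.erase a).erase a') a = 0 := by
      generalize hT : (j.erase a).erase a' = t at e1 e3 hat ha't ⊢
      rw [e1, e3]
      exact sign_cancel' t a a' hat ha't (fun h => hne h.symm)
    rw [hcoef, zero_smul]
  · rintro ⟨a, a'⟩ hq _
    have hne : a' ≠ a := (Finset.mem_erase.mp (Finset.mem_sigma.mp hq).2).1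
    intro h
    exact hne (congrArg Sigma.fst h)
  · rintro ⟨a, a'⟩ hq
    obtain ⟨ha, ha'⟩ := Finset.mem_sigma.mp hq
    exact Finset.mem_sigma.mpr ⟨(Finset.mem_erase.mp ha').2,
      Finset.mem_erase.mpr ⟨fun h => (Finset.mem_erase.mp ha').1 h.symm, ha⟩⟩
  · rintro ⟨a, a'⟩ hq
    rfl

lemma cechDown_sq (x : (Finset V × Finset V) →₀ ℤ) : cechDown (cechDown x) = 0 := by
  have h : (cechDown ∘ₗ cechDown :
      ((Finset V × Finset V) →₀ ℤ) →ₗ[ℤ] ((Finset V × Finset V) →₀ ℤ)) = 0 := by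
    refine Finsupp.lhom_ext' fun p => LinearMap.ext_ring ?_
    obtain ⟨j, s⟩ := p
    simpa using cechDown_sq_single j s
  simpa using LinearMap.congr_fun h x

lemma proj_down2_single (j s : Finset V) :
    projL (down2 (Finsupp.single ((j, s) : Finset V × Finset V) 1))
      = simplicialBoundary (projL (Finsupp.single (j, s) 1)) := by
  rw [down2_single, map_sum]
  have hp : projL (Finsupp.single ((j, s) : Finset V × Finset V) (1 : ℤ))
      = Finsupp.single s 1 := by
    rw [← projL_eq, Finsupp.mapDomain_single]
  rw [hp, simplicialBoundary_single]
  refine Finset.sum_congr rfl fun v _ => ?_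
  rw [map_smul, ← projL_eq, Finsupp.mapDomain_single]

lemma proj_down2 (x : (Finset V × Finset V) →₀ ℤ) :
    projL (down2 x) = simplicialBoundary (projL x) := by
  have h : (projL ∘ₗ down2 :
      ((Finset V × Finset V) →₀ ℤ) →ₗ[ℤ] (Finset V →₀ ℤ)) = simplicialBoundary ∘ₗ projL := by
    refine Finsupp.lhom_ext' fun p => LinearMap.ext_ring ?_
    obtain ⟨j, s⟩ := p
    simpa using proj_down2_single j s
  simpa using LinearMap.congr_fun h x

lemma down2_DC (b : Finset V → V) (x : (Finset V × Finset V) →₀ ℤ) :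
    down2 (cechDown (coneAll b x)) = cechDown x - cechDown (coneAll b (down2 x)) := by
  rw [← down2_cechDown]
  have h : down2 (coneAll b x) = x - coneAll b (down2 x) :=
    eq_sub_of_add_eq (cone_homotopy b x)
  rw [h, map_sub]

lemma down2_empty (j : Finset V) :
    down2 (Finsupp.single ((j, (∅ : Finset V)) : Finset V × Finset V) 1) = 0 := by
  rw [down2_single]; simp

lemma chase_formula (b : Finset V → V) (n : ℕ) (c : (Finset V × Finset V) →₀ ℤ)
    (hc : down2 c = 0) :
    down2 (((cechDown ∘ₗ coneAll b) ^ (n + 1)) c)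
      = ((-1 : ℤ) ^ n) • ((cechDown ∘ₗ coneAll b) ^ n) (cechDown c) := by
  induction n with
  | zero =>
    simp only [zero_add, pow_one, pow_zero, Module.End.one_apply, LinearMap.comp_apply, one_smul]
    rw [down2_DC b c, hc, map_zero, map_zero, sub_zero]
  | succ n ih =>
    rw [pow_succ', Module.End.mul_apply, LinearMap.comp_apply, down2_DC]
    have h0 : cechDown (((cechDown ∘ₗ coneAll b) ^ (n + 1)) c) = 0 := by
      rw [pow_succ', Module.End.mul_apply, LinearMap.comp_apply, cechDown_sq]
    rw [h0, ih, zero_sub, map_smul, map_smul]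
    rw [show ((cechDown ∘ₗ coneAll b) ^ (n + 1)) (cechDown c)
        = cechDown (coneAll b (((cechDown ∘ₗ coneAll b) ^ n) (cechDown c))) by
      rw [pow_succ', Module.End.mul_apply, LinearMap.comp_apply]]
    rw [pow_succ, mul_comm, mul_smul, neg_one_smul]

lemma sum_pull (T' : ((Finset V × Finset V) →₀ ℤ) →ₗ[ℤ] ((Finset V × Finset V) →₀ ℤ))
    (φ : (Finset V →₀ ℤ) →ₗ[ℤ] ℤ) (s : Finset V) :
    ∑ v ∈ s, posSign (s.erase v) v *
        φ (projL (T' (Finsupp.single ((s.erase v, (∅ : Finset V))) 1)))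
      = φ (projL (T' (cechDown (Finsupp.single ((s, (∅ : Finset V))) 1)))) := by
  rw [cechDown_single]
  simp only [map_sum, map_smul, smul_eq_mul]

lemma chase_pow {b : Finset V → V} (n : ℕ) (c : (Finset V × Finset V) →₀ ℤ) :
    chase b n c = ((cechDown ∘ₗ coneAll b) ^ n) c := by
  rw [chase, Module.End.pow_apply]; rfl

end DualChaseAux

open DualChaseAux in
/-- Dualization of the diagram chase for a saturated ordered cover `U` with
nerve `NU`: for a simplicial `k`-cocycle `α` on `NU` (i.e. `α ∘ ∂ = 0`), the
Čech cochain `i ↦ α((∂̌C)^{k+1}(e_i))` is a Čech cocycle with respect to the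
contravariant Čech coboundary, and its Čech cohomology class depends only on the
cohomology class of `α`: if `α − α'` is the coboundary `β ∘ ∂` of a cochain `β`,
then the associated Čech cochains differ by a Čech coboundary. -/
theorem dual_chase_cocycle_and_well_defined {X ι : Type*} [TopologicalSpace X]
    [LinearOrder ι] (U : ι → Set X) (hUopen : ∀ a, IsOpen (U a))
    (hsat : ∀ s : Finset ι, s.Nonempty → (⋂ a ∈ s, U a).Nonempty →
      ∃ j, (⋂ a ∈ s, U a) = U j)
    (b : Finset ι → ι)
    (hb : ∀ j : Finset ι, j.Nonempty → (⋂ a ∈ j, U a).Nonempty →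
      U (b j) = ⋂ a ∈ j, U a)
    (hbsingle : ∀ a : ι, b {a} = a)
    (hbmono : ∀ s t : Finset ι, s ⊆ t → b s ≤ b t)
    (k : ℕ)
    (α : (Finset ι →₀ ℤ) →ₗ[ℤ] ℤ)
    (hα : ∀ c : Finset ι →₀ ℤ, α (simplicialBoundary c) = 0) :
    (∀ s : Finset ι, s.card = k + 2 →
      cechCoboundary
        (fun i => α (Finsupp.mapDomain Prod.snd
          (chase b (k + 1) (Finsupp.single (i, (∅ : Finset ι)) 1)))) s = 0) ∧
    (∀ (α' : (Finset ι →₀ ℤ) →ₗ[ℤ] ℤ),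
      (∀ c : Finset ι →₀ ℤ, α' (simplicialBoundary c) = 0) →
      ∀ (β : (Finset ι →₀ ℤ) →ₗ[ℤ] ℤ),
      (∀ c : Finset ι →₀ ℤ, α c - α' c = β (simplicialBoundary c)) →
      ∃ γ : Finset ι → ℤ, ∀ s : Finset ι, s.card = k + 1 →
        (α (Finsupp.mapDomain Prod.snd
            (chase b (k + 1) (Finsupp.single (s, (∅ : Finset ι)) 1)))
          - α' (Finsupp.mapDomain Prod.snd
            (chase b (k + 1) (Finsupp.single (s, (∅ : Finset ι)) 1))))
          = cechCoboundary γ s) := by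
  have hchase : ∀ (n : ℕ) (c : (Finset ι × Finset ι) →₀ ℤ),
      chase b n c = ((cechDown ∘ₗ coneAll b) ^ n) c := fun n c => chase_pow n c
  constructor
  · intro s _
    simp only [cechCoboundary, hchase, projL_eq]
    rw [sum_pull ((cechDown ∘ₗ coneAll b) ^ (k + 1)) α s]
    have h1 := chase_formula b (k + 1) (Finsupp.single ((s, (∅ : Finset ι))) 1) (down2_empty s)
    have h2 : ((cechDown ∘ₗ coneAll b) ^ (k + 1))
          (cechDown (Finsupp.single ((s, (∅ : Finset ι))) 1))
        = ((-1 : ℤ) ^ (k + 1)) • down2 (((cechDown ∘ₗ coneAll b) ^ (k + 1 + 1))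
            (Finsupp.single ((s, (∅ : Finset ι))) 1)) := by
      rw [h1, smul_smul, ← pow_add, Even.neg_one_pow ⟨k + 1, rfl⟩, one_smul]
    rw [h2, map_smul, map_smul, smul_eq_mul, proj_down2, hα, mul_zero]
  · intro α' hα' β hβ
    refine ⟨fun j => ((-1 : ℤ) ^ k) * β (Finsupp.mapDomain Prod.snd
        (chase b k (Finsupp.single ((j, (∅ : Finset ι))) 1))), fun s _ => ?_⟩
    simp only [cechCoboundary, hchase, projL_eq]
    rw [hβ, ← proj_down2, chase_formula b k _ (down2_empty s), map_smul, map_smul, smul_eq_mul,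
      ← sum_pull ((cechDown ∘ₗ coneAll b) ^ k) β s, Finset.mul_sum]
    exact Finset.sum_congr rfl fun v _ => by ring
end
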